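/- arXiv:1801.09850 — 2 statements merged into one kernel-verified Lean document; each statement's English description precedes it below -/
import Mathlib

section
/- If x* is a solution of A ⊠ x = b with minimum support cardinality |supp(x*)|, then the collection {I_j : j ∈ J_{x*}}, where J_{x*} = {j : x*_j = x̄_j}, is a minimum-cardinality set cover of {1,…,m} by the sets I_j, and |J_{x*}| = |supp(x*)|. -/
/-!
Every solution lies below the principal solution `x̄`, and a max-plus product attains `b i` at
some `j` exactly when `x j = x̄ j = b i - A i j`; so the agreement set `J_x` of a solution covers
the rows by the sets `I_j`. Conversely, `x̄` cut down to any cover `K` is a solution with support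
`K`. Hence a sparsest solution `x*` has `|supp x*| ≤ |K|` for every cover `K`; as `x̄` is finite,
`J_{x*} ⊆ supp x*`, and `J_{x*}` is itself a cover, so equality holds throughout.
-/

open scoped Classical
open Finset

/-- Max-plus matrix-vector product: `(A ⊠ x) i = max_j (A i j + x j)`. -/
noncomputable def mpMul {m n : ℕ} (A : Fin m → Fin n → EReal) (x : Fin n → EReal) :
    Fin m → EReal := fun i => ⨆ j, A i j + x j

/-- Principal solution `x̄ j = min_i (b i − A i j)`. -/
noncomputable def principal {m n : ℕ} (A : Fin m → Fin n → EReal) (b : Fin m → ℝ) :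
    Fin n → EReal := fun j => ⨅ i, (b i : EReal) - A i j

/-- Every row and every column of `A` has a finite entry. -/
def DoublyAstic {m n : ℕ} (A : Fin m → Fin n → EReal) : Prop :=
  (∀ i, ∃ j, A i j ≠ ⊥) ∧ (∀ j, ∃ i, A i j ≠ ⊥)

/-- All entries lie in ℝ_max = ℝ ∪ {−∞}, i.e. are not +∞. -/
def RmaxMat {m n : ℕ} (A : Fin m → Fin n → EReal) : Prop := ∀ i j, A i j ≠ ⊤

def RmaxVec {n : ℕ} (x : Fin n → EReal) : Prop := ∀ j, x j ≠ ⊤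

/-- Support: indices of finite (non-bottom) components. -/
def supp {n : ℕ} (x : Fin n → EReal) : Set (Fin n) := {j | x j ≠ ⊥}

/-- ℓ₁ residual error `Σ_i (b i − (A ⊠ x) i)` (nonnegative under the lateness constraint). -/
noncomputable def err1 {m n : ℕ} (A : Fin m → Fin n → EReal) (b : Fin m → ℝ)
    (x : Fin n → EReal) : EReal := ∑ i, ((b i : EReal) - mpMul A x i)

namespace EReal

lemma le_coe_sub_iff_add_le {a x : EReal} {c : ℝ} : x ≤ c - a ↔ x + a ≤ c :=
  le_sub_iff_add_le (.inr (coe_ne_bot c)) (.inr (coe_ne_top c))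

lemma eq_coe_sub_of_add_eq {a x : EReal} {c : ℝ} (h : a + x = c) : x = c - a := by
  induction a with
  | bot => simp at h
  | coe a => rw [← h, add_sub_cancel_left]
  | top => induction x <;> simp at h

lemma add_coe_sub_cancel {a : EReal} (ha : a ≠ ⊥) (ha' : a ≠ ⊤) (c : ℝ) : a + (c - a) = c := by
  lift a to ℝ using ⟨ha', ha⟩
  rw [add_comm, sub_add_cancel]

lemma coe_sub_ne_top {a : EReal} (ha : a ≠ ⊥) (c : ℝ) : (c : EReal) - a ≠ ⊤ := by
  induction a with
  | bot => exact absurd rfl ha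
  | coe a => exact (EReal.coe_sub c a ▸ coe_ne_top _)
  | top => simp

lemma coe_sub_ne_bot {a : EReal} (ha : a ≠ ⊤) (c : ℝ) : (c : EReal) - a ≠ ⊥ := by
  induction a with
  | bot => simp
  | coe a => exact (EReal.coe_sub c a ▸ coe_ne_bot _)
  | top => exact absurd rfl ha

end EReal

variable {m n : ℕ} {A : Fin m → Fin n → EReal} {b : Fin m → ℝ}

lemma mpMul_le_iff_le_principal {x : Fin n → EReal} :
    (∀ i, mpMul A x i ≤ b i) ↔ x ≤ principal A b := by
  simp only [mpMul, principal, iSup_le_iff, Pi.le_def, le_iInf_iff,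
    EReal.le_coe_sub_iff_add_le, add_comm (x _)]
  exact forall_comm

lemma principal_ne_top (hcol : ∀ j, ∃ i, A i j ≠ ⊥) (j : Fin n) : principal A b j ≠ ⊤ := by
  obtain ⟨i, hi⟩ := hcol j
  exact ne_top_of_le_ne_top (EReal.coe_sub_ne_top hi (b i)) (iInf_le _ i)

lemma principal_ne_bot (hA : RmaxMat A) (j : Fin n) : principal A b j ≠ ⊥ := by
  cases isEmpty_or_nonempty (Fin m)
  · simp [principal, iInf_of_empty]
  · obtain ⟨i, hi⟩ := exists_eq_ciInf_of_finite (f := fun i => (b i : EReal) - A i j)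
    rw [principal, ← hi]
    exact EReal.coe_sub_ne_bot (hA i j) (b i)

/-- `K` indexes a cover of the rows by the sets `I_j = {i | b i - A i j = principal A b j}`. -/
def Covers (A : Fin m → Fin n → EReal) (b : Fin m → ℝ) (K : Set (Fin n)) : Prop :=
  ∀ i, ∃ j ∈ K, (b i : EReal) - A i j = principal A b j

lemma Covers.mono {K L : Set (Fin n)} (hK : Covers A b K) (hKL : K ⊆ L) : Covers A b L :=
  fun i => (hK i).imp fun _ ⟨hj, h⟩ => ⟨hKL hj, h⟩

lemma covers_of_mpMul_eq {x : Fin n → EReal} (hsol : ∀ i, mpMul A x i = b i) :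
    Covers A b {j | x j = principal A b j} := by
  have hle : x ≤ principal A b := mpMul_le_iff_le_principal.1 fun i => (hsol i).le
  intro i
  have : Nonempty (Fin n) := by
    by_contra h
    simpa [mpMul, not_nonempty_iff.1 h] using hsol i
  obtain ⟨j, hj⟩ := exists_eq_ciSup_of_finite (f := fun j => A i j + x j)
  have hxj : x j = b i - A i j := EReal.eq_coe_sub_of_add_eq (hj.trans (hsol i))
  have hxj' : x j = principal A b j := (hle j).antisymm (hxj ▸ iInf_le _ i)
  exact ⟨j, hxj', hxj ▸ hxj'⟩

lemma mpMul_eq_of_covers (hA : RmaxMat A) (hcol : ∀ j, ∃ i, A i j ≠ ⊥) {x : Fin n → EReal}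
    (hle : x ≤ principal A b) (hcov : Covers A b {j | x j = principal A b j}) (i : Fin m) :
    mpMul A x i = b i := by
  refine (mpMul_le_iff_le_principal.2 hle i).antisymm ?_
  obtain ⟨j, hxj : x j = _, hj⟩ := hcov i
  have hAij : A i j ≠ ⊥ := fun h => principal_ne_top hcol j (by rw [← hj, h, EReal.coe_sub_bot])
  calc (b i : EReal) = A i j + x j := by
        rw [hxj, ← hj, EReal.add_coe_sub_cancel hAij (hA i j)]
    _ ≤ mpMul A x i := le_iSup (fun k => A i k + x k) j

lemma exists_mpMul_eq_supp_eq_of_covers (hA : RmaxMat A) (hcol : ∀ j, ∃ i, A i j ≠ ⊥)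
    {K : Finset (Fin n)} (hK : Covers A b K) :
    ∃ x, RmaxVec x ∧ (∀ i, mpMul A x i = b i) ∧ supp x = K := by
  set x := K.piecewise (principal A b) ⊥
  have hle : x ≤ principal A b := fun j => by
    by_cases hj : j ∈ K <;> simp [x, hj]
  refine ⟨x, fun j => ne_top_of_le_ne_top (principal_ne_top hcol j) (hle j),
    mpMul_eq_of_covers hA hcol hle (hK.mono fun j hj => by simp [x, Finset.mem_coe.1 hj]), ?_⟩
  ext j
  by_cases hj : j ∈ K <;> simp [supp, x, hj, principal_ne_bot hA j]

theorem stmt6_general {m n : ℕ} (A : Fin m → Fin n → EReal) (b : Fin m → ℝ)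
    (hA : RmaxMat A) (hastic : DoublyAstic A)
    (xs : Fin n → EReal)
    (hsolx : ∀ i, mpMul A xs i = (b i : EReal))
    (hmin : ∀ x : Fin n → EReal, RmaxVec x → (∀ i, mpMul A x i = (b i : EReal)) →
      (supp xs).ncard ≤ (supp x).ncard) :
    (∀ i, ∃ j ∈ {j : Fin n | xs j = principal A b j},
        (b i : EReal) - A i j = principal A b j) ∧
    {j : Fin n | xs j = principal A b j}.ncard = (supp xs).ncard ∧
    (∀ K : Finset (Fin n), (∀ i, ∃ j ∈ K, (b i : EReal) - A i j = principal A b j) →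
      {j : Fin n | xs j = principal A b j}.ncard ≤ K.card) := by
  set J := {j : Fin n | xs j = principal A b j}
  have hJ : Covers A b J := covers_of_mpMul_eq hsolx
  have hsupp_le : ∀ K : Finset (Fin n), Covers A b K → (supp xs).ncard ≤ K.card := by
    intro K hK
    obtain ⟨x, hx, hsol, hsupp⟩ := exists_mpMul_eq_supp_eq_of_covers hA hastic.2 hK
    simpa [hsupp] using hmin x hx hsol
  have hJ_supp : J ⊆ supp xs := fun j (hj : xs j = _) => by
    simp [supp, hj, principal_ne_bot hA j]
  have hJ_card : J.ncard = (supp xs).ncard :=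
    (Set.ncard_le_ncard hJ_supp).antisymm
      (by simpa [Set.ncard_eq_toFinset_card'] using hsupp_le J.toFinset (by simpa using hJ))
  exact ⟨hJ, hJ_card, fun K hK => hJ_card ▸ hsupp_le K hK⟩

/-- the agreement set of a sparsest solution gives a minimum set cover, and
its cardinality equals that of the support. -/
theorem stmt6 {m n : ℕ} (A : Fin m → Fin n → EReal) (b : Fin m → ℝ)
    (hA : RmaxMat A) (hastic : DoublyAstic A)
    (xs : Fin n → EReal) (hxs : RmaxVec xs)
    (hsolx : ∀ i, mpMul A xs i = (b i : EReal))
    (hmin : ∀ x : Fin n → EReal, RmaxVec x → (∀ i, mpMul A x i = (b i : EReal)) →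
      (supp xs).ncard ≤ (supp x).ncard) :
    (∀ i, ∃ j ∈ {j : Fin n | xs j = principal A b j},
        (b i : EReal) - A i j = principal A b j) ∧
    {j : Fin n | xs j = principal A b j}.ncard = (supp xs).ncard ∧
    (∀ K : Finset (Fin n), (∀ i, ∃ j ∈ K, (b i : EReal) - A i j = principal A b j) →
      {j : Fin n | xs j = principal A b j}.ncard ≤ K.card) :=
  stmt6_general A b hA hastic xs hsolx hmin
end

section
/- Big-M equivalence: for M > ε ≥ 0 and Â(M) as defined, a vector x ∈ ℝ_max^n satisfies both ‖b − A ⊠ x‖₁ ≤ ε and A ⊠ x ≤ b if and only if it satisfies both ‖b − Â(M) ⊠ x‖₁ ≤ ε and Â(M) ⊠ x ≤ b. Hence the two sparsest-approximate-solution problems have the same feasible sets and the same optimal solutions. -/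
open scoped Classical
open Finset

/-- The big-M modification of `A`: infinite entries replaced by `−M + b i − x̄ j`. -/
noncomputable def bigM {m n : ℕ} (A : Fin m → Fin n → EReal) (b : Fin m → ℝ) (M : ℝ) :
    Fin m → Fin n → EReal :=
  fun i j => if A i j = ⊥ then (b i : EReal) - (M : EReal) - principal A b j else A i j

/-! Replacing the `−∞` entries of `A` by `b i − M − x̄ j` can only increase `A ⊠ x`. The lateness
constraint forces `x ≤ x̄` (residuation), so each new term `Â i j + x j` is at most `b i − M`. As
every residual is at most the total error `≤ ε < M`, this lies strictly below `(Â ⊠ x) i` and never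
attains the maximum: on the feasible set `Â ⊠ x = A ⊠ x`, so the two errors coincide. -/

namespace EReal

lemma coe_sub_add_le {c : ℝ} {p y : EReal} (hy : y ≤ p) : (c - p) + y ≤ c :=
  add_le_of_le_sub (sub_le_sub le_rfl hy)

lemma le_coe_sub_of_add_le {c : ℝ} {a x : EReal} (h : a + x ≤ c) : x ≤ c - a :=
  (le_sub_iff_add_le (.inr (coe_ne_bot c)) (.inr (coe_ne_top c))).2 (by rwa [add_comm])

lemma coe_sub_lt_of_coe_sub_le {c ε M : ℝ} {y : EReal} (hM : ε < M) (h : (c : EReal) - y ≤ ε) :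
    ((c - M : ℝ) : EReal) < y := by
  have hcy : (c : EReal) ≤ ε + y :=
    (sub_le_iff_le_add (.inr (coe_ne_top ε)) (.inr (coe_ne_bot ε))).1 h
  calc ((c - M : ℝ) : EReal) < ((c - ε : ℝ) : EReal) := by exact_mod_cast (by linarith)
    _ ≤ y := by rw [coe_sub]; exact sub_le_of_le_add' hcy

end EReal

section MaxPlus

variable {m n : ℕ}

lemma mpMul_mono {A B : Fin m → Fin n → EReal} (h : ∀ i j, A i j ≤ B i j) (x : Fin n → EReal)
    (i : Fin m) : mpMul A x i ≤ mpMul B x i :=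
  iSup_mono fun j => add_le_add_left (h i j) _

lemma le_principal_of_mpMul_le {A : Fin m → Fin n → EReal} {b : Fin m → ℝ} {x : Fin n → EReal}
    (h : ∀ i, mpMul A x i ≤ b i) (j : Fin n) : x j ≤ principal A b j :=
  le_iInf fun i => EReal.le_coe_sub_of_add_le <| (le_iSup (fun j => A i j + x j) j).trans (h i)

lemma coe_sub_mpMul_le_err1 {A : Fin m → Fin n → EReal} {b : Fin m → ℝ} {x : Fin n → EReal}
    (h : ∀ i, mpMul A x i ≤ b i) (i : Fin m) : (b i : EReal) - mpMul A x i ≤ err1 A b x :=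
  single_le_sum (fun k _ => (EReal.sub_nonneg (.inl (EReal.coe_ne_top _))
    (.inl (EReal.coe_ne_bot _))).2 (h k)) (mem_univ i)

lemma err1_anti {A B : Fin m → Fin n → EReal} {b : Fin m → ℝ} {x : Fin n → EReal}
    (h : ∀ i, mpMul A x i ≤ mpMul B x i) : err1 B b x ≤ err1 A b x :=
  sum_le_sum fun i _ => EReal.sub_le_sub le_rfl (h i)

end MaxPlus

section BigM

variable {m n : ℕ} (A : Fin m → Fin n → EReal) (b : Fin m → ℝ) {M : ℝ} {x : Fin n → EReal}

lemma le_bigM (M : ℝ) (i : Fin m) (j : Fin n) : A i j ≤ bigM A b M i j := by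
  unfold bigM
  split_ifs with h
  · exact h ▸ bot_le
  · exact le_rfl

lemma bigM_add_le {i : Fin m} {j : Fin n} (hAij : A i j = ⊥) (hx : x j ≤ principal A b j) :
    bigM A b M i j + x j ≤ ((b i - M : ℝ) : EReal) := by
  rw [bigM, if_pos hAij, ← EReal.coe_sub]
  exact EReal.coe_sub_add_le hx

lemma mpMul_bigM_le_max (hx : ∀ j, x j ≤ principal A b j) (i : Fin m) :
    mpMul (bigM A b M) x i ≤ max (mpMul A x i) ((b i - M : ℝ) : EReal) := by
  refine iSup_le fun j => ?_
  by_cases hAij : A i j = ⊥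
  · exact (bigM_add_le A b hAij (hx j)).trans (le_max_right _ _)
  · rw [bigM, if_neg hAij]
    exact (le_iSup (fun j => A i j + x j) j).trans (le_max_left _ _)

lemma mpMul_bigM_le (hM : 0 ≤ M) (hx : ∀ i, mpMul A x i ≤ b i) (i : Fin m) :
    mpMul (bigM A b M) x i ≤ b i := by
  refine (mpMul_bigM_le_max A b (le_principal_of_mpMul_le hx) i).trans (max_le (hx i) ?_)
  exact_mod_cast (by linarith : b i - M ≤ b i)

lemma mpMul_bigM_eq (hx : ∀ j, x j ≤ principal A b j) {i : Fin m}
    (hi : ((b i - M : ℝ) : EReal) < mpMul (bigM A b M) x i) :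
    mpMul (bigM A b M) x i = mpMul A x i := by
  refine le_antisymm ?_ (mpMul_mono (le_bigM A b M) x i)
  exact (le_max_iff.1 (mpMul_bigM_le_max A b hx i)).resolve_right hi.not_ge

end BigM

theorem stmt15_general {m n : ℕ} (A : Fin m → Fin n → EReal) (b : Fin m → ℝ) (ε M : ℝ)
    (hε : 0 ≤ ε) (hM : ε < M) :
    ∀ x : Fin n → EReal, RmaxVec x →
      ((err1 A b x ≤ (ε : EReal) ∧ ∀ i, mpMul A x i ≤ (b i : EReal)) ↔
        (err1 (bigM A b M) b x ≤ (ε : EReal) ∧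
          ∀ i, mpMul (bigM A b M) x i ≤ (b i : EReal))) := by
  intro x _
  have hle : ∀ i, mpMul A x i ≤ mpMul (bigM A b M) x i := mpMul_mono (le_bigM A b M) x
  constructor
  · rintro ⟨herr, hlate⟩
    exact ⟨(err1_anti hle).trans herr, mpMul_bigM_le A b (by linarith) hlate⟩
  · rintro ⟨herr, hlate⟩
    have hlateA : ∀ i, mpMul A x i ≤ b i := fun i => (hle i).trans (hlate i)
    have heq : ∀ i, mpMul (bigM A b M) x i = mpMul A x i := fun i =>
      mpMul_bigM_eq A b (le_principal_of_mpMul_le hlateA)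
        (EReal.coe_sub_lt_of_coe_sub_le hM ((coe_sub_mpMul_le_err1 hlate i).trans herr))
    refine ⟨?_, hlateA⟩
    simpa only [err1, heq] using herr

/-- big-M equivalence of the feasible sets of the sparsest approximate
solution problems. -/
theorem stmt15 {m n : ℕ} (A : Fin m → Fin n → EReal) (b : Fin m → ℝ) (ε M : ℝ)
    (hε : 0 ≤ ε) (hM : ε < M) (hA : RmaxMat A) (hastic : DoublyAstic A) :
    ∀ x : Fin n → EReal, RmaxVec x →
      ((err1 A b x ≤ (ε : EReal) ∧ ∀ i, mpMul A x i ≤ (b i : EReal)) ↔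
        (err1 (bigM A b M) b x ≤ (ε : EReal) ∧
          ∀ i, mpMul (bigM A b M) x i ≤ (b i : EReal))) :=
  stmt15_general A b ε M hε hM
end
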